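/- Let k ≥ 1, 0 ≤ ℓ ≤ k-1, and j satisfy ℓ+1 > j+1 ≥ 0. Suppose S^{d-1} (d = 2k) is a sphere of squared radius ρ^2 given by ρ^2 = (1/(ℓ+1)) [ Σ_{i=0}^{ℓ} r_i^2 + ℓ Σ_{i=0}^{ℓ} ||x_i||^2 ], where for j+1 ≤ i ≤ ℓ the point x_i lies on a line through the origin at distance r_i from a fixed point on the circle of radius 1/√2, and for 0 ≤ i ≤ j, x_i lies on the bisector through the origin of two distinct points on the circle at equal distance r_i. If the configuration minimizes ρ^2, then increasing j strictly increases the minimum; i.e., ρ_{ℓ,j}(s) < ρ_{ℓ,j+1}(s) for -1 ≤ j < ℓ, where ρ_{ℓ,j}(s) denotes the circumradius of the ideal simplex Σ_{ℓ,j} with short edge length 2s, 0 < s < 1/√(2k). -/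
import Mathlib


/-- `x` lies on the circle of radius `1/√2` centered at the origin in the coordinate
2-plane of `ℝ^{2k}` spanned by coordinates `2c` and `2c+1`. -/
def OnCircle (k : ℕ) (c : ℕ) (x : EuclideanSpace ℝ (Fin (2 * k))) : Prop :=
  (∑ i, x i ^ 2) = 1 / 2 ∧ ∀ i : Fin (2 * k), (i : ℕ) / 2 ≠ c → x i = 0

/-- `ρ` is the circumradius of an ideal simplex `Σ_{ℓ,j}` (with `t = j+1` short edges of
length `2s`) whose vertices lie on `ℓ+1` of the `k` orthogonal circles of radius `1/√2`
in `ℝ^{2k}`: the first `t` (in some order) of the chosen circles carry two vertices at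
distance `2s`, the remaining circles carry one vertex, and `ρ` is the distance from the
circumcenter (the equidistant point in the affine hull of the vertices) to the vertices. -/
def IsIdealCircumradius (k ℓ t : ℕ) (s ρ : ℝ) : Prop :=
  ∃ (c : Fin (ℓ + 1) → Fin k) (u w : Fin (ℓ + 1) → EuclideanSpace ℝ (Fin (2 * k)))
    (o : EuclideanSpace ℝ (Fin (2 * k))),
    Function.Injective c ∧
    (∀ i, OnCircle k (c i) (u i)) ∧
    (∀ i : Fin (ℓ + 1), (i : ℕ) < t → OnCircle k (c i) (w i) ∧ dist (u i) (w i) = 2 * s) ∧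
    0 ≤ ρ ∧
    (∀ i, dist o (u i) = ρ) ∧
    (∀ i : Fin (ℓ + 1), (i : ℕ) < t → dist o (w i) = ρ) ∧
    o ∈ affineSpan ℝ
      (Set.range u ∪ {x | ∃ i : Fin (ℓ + 1), (i : ℕ) < t ∧ x = w i})

open RealInnerProductSpace

lemma onCircle_inner_self {k c : ℕ} {x : EuclideanSpace ℝ (Fin (2 * k))}
    (hx : OnCircle k c x) : ⟪x, x⟫ = 1 / 2 := by
  rw [PiLp.inner_apply]
  simpa [sq] using hx.1

lemma onCircle_inner_zero {k c c' : ℕ} {x y : EuclideanSpace ℝ (Fin (2 * k))}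
    (h : c ≠ c') (hx : OnCircle k c x) (hy : OnCircle k c' y) : ⟪x, y⟫ = 0 := by
  rw [PiLp.inner_apply]
  refine Finset.sum_eq_zero fun i _ => ?_
  by_cases hi : (i : ℕ) / 2 = c
  · rw [hy.2 i (by rw [hi]; exact h)]; simp
  · simp [hx.2 i hi]

lemma inner_of_dist {k : ℕ} {x y : EuclideanSpace ℝ (Fin (2 * k))} {d : ℝ}
    (hx : ⟪x, x⟫ = 1 / 2) (hy : ⟪y, y⟫ = 1 / 2) (hd : dist x y = d) :
    ⟪x, y⟫ = 1 / 2 - d ^ 2 / 2 := by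
  have h : ‖x - y‖ ^ 2 = ‖x‖ ^ 2 - 2 * ⟪x, y⟫ + ‖y‖ ^ 2 := norm_sub_sq_real x y
  rw [← dist_eq_norm, hd, ← real_inner_self_eq_norm_sq, ← real_inner_self_eq_norm_sq, hx, hy] at h
  linarith

lemma inner_center {k : ℕ} {o v : EuclideanSpace ℝ (Fin (2 * k))} {ρ : ℝ}
    (hv : ⟪v, v⟫ = 1 / 2) (hd : dist o v = ρ) :
    ⟪o, v⟫ = (⟪o, o⟫ + 1 / 2 - ρ ^ 2) / 2 := by
  have h : ‖o - v‖ ^ 2 = ‖o‖ ^ 2 - 2 * ⟪o, v⟫ + ‖v‖ ^ 2 := norm_sub_sq_real o v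
  rw [← dist_eq_norm, hd, ← real_inner_self_eq_norm_sq, ← real_inner_self_eq_norm_sq, hv] at h
  linarith

lemma circumradius_formula (k ℓ t : ℕ) (ht : t ≤ ℓ + 1) (s ρ : ℝ) (hs0 : 0 < s)
    (hs2 : 2 * s ^ 2 < 1) (h : IsIdealCircumradius k ℓ t s ρ) :
    ρ ^ 2 = 1 / 2 - 1 / (2 * ((ℓ : ℝ) + 1 - t) + 2 * t / (1 - 2 * s ^ 2)) := by
  classical
  obtain ⟨c, u, w, o, hc, hu, hw, hρ0, hou, how, hmem⟩ := h
  set f : Fin (ℓ + 1) ⊕ Fin (ℓ + 1) → EuclideanSpace ℝ (Fin (2 * k)) :=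
    Sum.elim u (fun i => if (i : ℕ) < t then w i else u i) with hf
  have hsub : (Set.range u ∪ {x | ∃ i : Fin (ℓ + 1), (i : ℕ) < t ∧ x = w i}) ⊆ Set.range f := by
    rintro x (⟨i, rfl⟩ | ⟨i, hit, rfl⟩)
    · exact ⟨Sum.inl i, rfl⟩
    · exact ⟨Sum.inr i, by simp [hf, hit]⟩
  have hmem' : o ∈ affineSpan ℝ (Set.range f) :=
    affineSpan_mono ℝ hsub hmem
  obtain ⟨lam, hlam1, hlam⟩ := eq_affineCombination_of_mem_affineSpan_of_fintype hmem'
  have ho : o = ∑ a, lam a • f a := by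
    rw [hlam, Finset.affineCombination_eq_linear_combination _ _ _ hlam1]
  have hfc : ∀ a, OnCircle k (c (Sum.elim id id a)) (f a) := by
    rintro (i | i)
    · exact hu i
    · by_cases hit : (i : ℕ) < t
      · simpa [hf, hit] using (hw i hit).1
      · simpa [hf, hit] using hu i
  have hfd : ∀ a, dist o (f a) = ρ := by
    rintro (i | i)
    · exact hou i
    · by_cases hit : (i : ℕ) < t
      · simpa [hf, hit] using how i hit
      · simpa [hf, hit] using hou i
  set γ : ℝ := (⟪o, o⟫ + 1 / 2 - ρ ^ 2) / 2 with hγ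
  have hiofa : ∀ a, ⟪o, f a⟫ = γ := fun a =>
    inner_center (onCircle_inner_self (hfc a)) (hfd a)
  have hoo : ⟪o, o⟫ = γ := by
    nth_rewrite 2 [ho]
    rw [inner_sum]
    simp only [real_inner_smul_right, hiofa]
    rw [← Finset.sum_mul, hlam1, one_mul]
  have hρ2 : ρ ^ 2 = 1 / 2 - γ := by
    have h' := hγ
    rw [hoo] at h'
    linarith
  have hden : (0 : ℝ) < 1 - 2 * s ^ 2 := by linarith
  -- per-circle expansion
  have expand : ∀ (i : Fin (ℓ + 1)) (v : EuclideanSpace ℝ (Fin (2 * k))),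
      OnCircle k (c i) v →
      ⟪o, v⟫ = lam (Sum.inl i) * ⟪u i, v⟫ + lam (Sum.inr i) * ⟪f (Sum.inr i), v⟫ := by
    intro i v hv
    rw [ho, sum_inner]
    simp only [real_inner_smul_left]
    rw [Fintype.sum_sum_type]
    have h1 : ∑ i' : Fin (ℓ + 1), lam (Sum.inl i') * ⟪f (Sum.inl i'), v⟫
        = lam (Sum.inl i) * ⟪u i, v⟫ := by
      refine Finset.sum_eq_single i (fun i' _ hne => ?_) (fun h => absurd (Finset.mem_univ i) h)
      rw [onCircle_inner_zero
        (fun hcc => hne (hc (Fin.val_injective hcc))) (hfc (Sum.inl i')) hv, mul_zero]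
    have h2 : ∑ i' : Fin (ℓ + 1), lam (Sum.inr i') * ⟪f (Sum.inr i'), v⟫
        = lam (Sum.inr i) * ⟪f (Sum.inr i), v⟫ := by
      refine Finset.sum_eq_single i (fun i' _ hne => ?_) (fun h => absurd (Finset.mem_univ i) h)
      rw [onCircle_inner_zero
        (fun hcc => hne (hc (Fin.val_injective hcc))) (hfc (Sum.inr i')) hv, mul_zero]
    rw [h1, h2]
  have key : ∀ i : Fin (ℓ + 1), lam (Sum.inl i) + lam (Sum.inr i)
      = if (i : ℕ) < t then 2 * γ / (1 - 2 * s ^ 2) else 2 * γ := by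
    intro i
    by_cases hit : (i : ℕ) < t
    · have hwi := hw i hit
      have hiu : ⟪u i, u i⟫ = 1 / 2 := onCircle_inner_self (hu i)
      have hiw : ⟪w i, w i⟫ = 1 / 2 := onCircle_inner_self hwi.1
      have huw : ⟪u i, w i⟫ = 1 / 2 - (2 * s) ^ 2 / 2 := inner_of_dist hiu hiw hwi.2
      have hwu : ⟪w i, u i⟫ = 1 / 2 - (2 * s) ^ 2 / 2 := by
        rw [real_inner_comm]; exact huw
      have hfr : f (Sum.inr i) = w i := by simp [hf, hit]
      have e1 := expand i (u i) (hu i)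
      have e2 := expand i (w i) hwi.1
      rw [hfr, hiu, hwu] at e1
      rw [hfr, hiw, huw] at e2
      have hgu : ⟪o, u i⟫ = γ := by simpa [hf] using hiofa (Sum.inl i)
      have hgw : ⟪o, w i⟫ = γ := by rw [← hfr]; exact hiofa (Sum.inr i)
      rw [hgu] at e1
      rw [hgw] at e2
      rw [if_pos hit, eq_div_iff (ne_of_gt hden)]
      linear_combination -e1 - e2
    · have hiu : ⟪u i, u i⟫ = 1 / 2 := onCircle_inner_self (hu i)
      have e1 := expand i (u i) (hu i)
      have hfr : f (Sum.inr i) = u i := by simp [hf, hit]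
      rw [hfr, hiu] at e1
      have : ⟪o, u i⟫ = γ := by simpa [hf, hit] using hiofa (Sum.inr i)
      rw [this] at e1
      rw [if_neg hit]
      linarith
  -- counting
  have hcard : (Finset.univ.filter (fun i : Fin (ℓ + 1) => (i : ℕ) < t)).card = t := by
    rw [Finset.card_filter]
    rw [Fin.sum_univ_eq_sum_range (fun i => if i < t then (1 : ℕ) else 0)]
    rw [← Finset.sum_filter]
    have e : (Finset.range (ℓ + 1)).filter (fun i => i < t) = Finset.range t := by
      ext i
      simp only [Finset.mem_filter, Finset.mem_range]
      omega
    rw [e]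
    simp
  have hcard' : (Finset.univ.filter (fun i : Fin (ℓ + 1) => ¬ (i : ℕ) < t)).card
      = ℓ + 1 - t := by
    have := Finset.card_filter_add_card_filter_not
      (s := (Finset.univ : Finset (Fin (ℓ + 1)))) (p := fun i : Fin (ℓ + 1) => (i : ℕ) < t)
    rw [hcard] at this
    simp only [Finset.card_univ, Fintype.card_fin] at this
    omega
  have hsum : (1 : ℝ) = (t : ℝ) * (2 * γ / (1 - 2 * s ^ 2)) + ((ℓ : ℝ) + 1 - t) * (2 * γ) := by
    have h1 := hlam1
    rw [Fintype.sum_sum_type] at h1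
    rw [← Finset.sum_add_distrib] at h1
    rw [Finset.sum_congr rfl (fun i _ => key i)] at h1
    rw [Finset.sum_ite, Finset.sum_const, Finset.sum_const, hcard, hcard'] at h1
    rw [nsmul_eq_mul, nsmul_eq_mul, Nat.cast_sub ht] at h1
    push_cast at h1 ⊢
    linear_combination -h1
  set D : ℝ := 2 * ((ℓ : ℝ) + 1 - t) + 2 * t / (1 - 2 * s ^ 2) with hD
  have hγD : γ * D = 1 := by
    rw [hD]
    calc γ * (2 * ((ℓ : ℝ) + 1 - t) + 2 * t / (1 - 2 * s ^ 2))
        = (t : ℝ) * (2 * γ / (1 - 2 * s ^ 2)) + ((ℓ : ℝ) + 1 - t) * (2 * γ) := by ring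
      _ = 1 := hsum.symm
  have ht' : (t : ℝ) ≤ (ℓ : ℝ) + 1 := by exact_mod_cast ht
  have hD0 : 0 ≤ D := by
    rw [hD]
    have h2 : (0 : ℝ) ≤ 2 * (t : ℝ) / (1 - 2 * s ^ 2) :=
      div_nonneg (by positivity) (le_of_lt hden)
    linarith
  have hDpos : 0 < D := by
    rcases hD0.lt_or_eq with h | h
    · exact h
    · exfalso; rw [← h, mul_zero] at hγD; exact zero_ne_one hγD
  have hγ1 : γ = 1 / D := by
    rw [eq_div_iff (ne_of_gt hDpos)]
    exact hγD
  rw [hρ2, hγ1]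

/-- Ordering of circumradii of ideal simplices: for `-1 ≤ j < ℓ` (here `t = j+1`),
`ρ_{ℓ,j}(s) < ρ_{ℓ,j+1}(s)` whenever `0 < s < 1/√(2k)`. -/
theorem idealCircumradius_strict_mono (k ℓ t : ℕ) (hk : 1 ≤ k) (hℓ : ℓ + 1 ≤ k)
    (ht : t ≤ ℓ) (s ρ ρ' : ℝ) (hs0 : 0 < s) (hs1 : s < 1 / Real.sqrt (2 * k))
    (h1 : IsIdealCircumradius k ℓ t s ρ)
    (h2 : IsIdealCircumradius k ℓ (t + 1) s ρ') :
    ρ < ρ' := by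
  have hkR : (1 : ℝ) ≤ (k : ℝ) := by exact_mod_cast hk
  have h2k : (0 : ℝ) < 2 * (k : ℝ) := by linarith
  have hsqrt : 0 < Real.sqrt (2 * (k : ℝ)) := Real.sqrt_pos.2 h2k
  have hs2 : 2 * s ^ 2 < 1 := by
    have hmul : s * Real.sqrt (2 * (k : ℝ)) < 1 := by
      have := (lt_div_iff₀ hsqrt).mp hs1
      linarith
    have hsq : (s * Real.sqrt (2 * (k : ℝ))) ^ 2 < 1 := by
      nlinarith [mul_pos hs0 hsqrt]
    have hss : s ^ 2 * (2 * (k : ℝ)) < 1 := by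
      have := Real.sq_sqrt h2k.le
      nlinarith
    nlinarith [sq_nonneg s]
  have hden : (0 : ℝ) < 1 - 2 * s ^ 2 := by linarith
  have hρ0 : 0 ≤ ρ := by obtain ⟨_, _, _, _, _, _, _, h, _⟩ := h1; exact h
  have hρ'0 : 0 ≤ ρ' := by obtain ⟨_, _, _, _, _, _, _, h, _⟩ := h2; exact h
  have e1 := circumradius_formula k ℓ t (by omega) s ρ hs0 hs2 h1
  have e2 := circumradius_formula k ℓ (t + 1) (by omega) s ρ' hs0 hs2 h2
  push_cast at e1 e2
  set D1 : ℝ := 2 * ((ℓ : ℝ) + 1 - t) + 2 * t / (1 - 2 * s ^ 2) with hD1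
  set D2 : ℝ := 2 * ((ℓ : ℝ) + 1 - ((t : ℝ) + 1)) + 2 * ((t : ℝ) + 1) / (1 - 2 * s ^ 2) with hD2
  have htR : (t : ℝ) ≤ (ℓ : ℝ) := by exact_mod_cast ht
  have hq : (2 : ℝ) < 2 / (1 - 2 * s ^ 2) := by
    rw [lt_div_iff₀ hden]
    nlinarith
  have hD1pos : 0 < D1 := by
    rw [hD1]
    have h2' : (0 : ℝ) ≤ 2 * (t : ℝ) / (1 - 2 * s ^ 2) :=
      div_nonneg (by positivity) hden.le
    linarith
  have hdiff : D2 - D1 = 2 / (1 - 2 * s ^ 2) - 2 := by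
    rw [hD1, hD2]
    ring
  have hlt : D1 < D2 := by
    have hpos : 0 < D2 - D1 := by rw [hdiff]; linarith
    exact sub_pos.mp hpos
  have hinv : 1 / D2 < 1 / D1 := one_div_lt_one_div_of_lt hD1pos hlt
  have hsq : ρ ^ 2 < ρ' ^ 2 := by rw [e1, e2]; linarith
  exact lt_of_pow_lt_pow_left₀ 2 hρ'0 hsq
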